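/- Let n = 1, χ > 0, p, q ≥ 1 with p ≤ q, m > 0, λ ∈ [1/3,1], K > 0 with K ≥ √(b_λ R), and let B₀ ∈ (0,1) satisfy K√B₀ ≤ R, B₀ ≤ K²/(4(a_λ + b_λ)²), and B₀ < 2λ A_T/(e^d μ), where μ := m/(ω₁ R). If for some T > 0 the function B ∈ C¹([0,T)) is positive and nonincreasing with B(0) ≤ B₀ and B′(t) ≥ −(d/√(d²+1))·(2λ A_T/e^d)^{p−1} for all t ∈ (0,T), then (𝒫 w_in)(s,t) ≤ 0 for all t ∈ (0,T) and all s ∈ (0,B(t)). -/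

import Mathlib

open Real Set

/-- `a_λ := (1-λ)²/(2λ)`. -/
noncomputable def aL (l : ℝ) : ℝ := (1 - l) ^ 2 / (2 * l)

/-- `b_λ := (3λ-1)/(2λ)`. -/
noncomputable def bL (l : ℝ) : ℝ := (3 * l - 1) / (2 * l)

/-- `ω_n`, the `(n-1)`-dimensional measure of the unit sphere in `ℝⁿ`,
equals `n` times the volume of the unit ball. -/
noncomputable def omegaN (n : ℕ) : ℝ :=
  (n : ℝ) * (MeasureTheory.volume (Metric.ball (0 : EuclideanSpace ℝ (Fin n)) 1)).toReal

/-- The comparison profile `φ`. -/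
noncomputable def phi (l d ξ : ℝ) : ℝ :=
  if ξ < 1 then (2 * l / (d * Real.exp d)) * (Real.exp (d * ξ) - 1)
  else 1 - aL l / (ξ - bL l)

/-- The derivative `φ'`. -/
noncomputable def phiD (l d ξ : ℝ) : ℝ :=
  if ξ < 1 then 2 * l * Real.exp (d * (ξ - 1)) else aL l / (ξ - bL l) ^ 2

/-- The second derivative `φ''`. -/
noncomputable def phiDD (l d ξ : ℝ) : ℝ :=
  if ξ < 1 then 2 * d * l * Real.exp (d * (ξ - 1)) else -2 * aL l / (ξ - bL l) ^ 3

/-- `N(t)`. -/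
noncomputable def Nf (l R K : ℝ) (n : ℕ) (B : ℝ → ℝ) (t : ℝ) : ℝ :=
  K ^ 2 + aL l * R ^ n - (aL l + bL l) * (2 * K * Real.sqrt (B t) - bL l * B t)

/-- `A(t)`. -/
noncomputable def Af (m ωn l R K : ℝ) (n : ℕ) (B : ℝ → ℝ) (t : ℝ) : ℝ :=
  (m / ωn) * (K ^ 2 - 2 * bL l * K * Real.sqrt (B t) + (bL l) ^ 2 * B t) / Nf l R K n B t

/-- `D(t)`. -/
noncomputable def Df (m ωn l R K : ℝ) (n : ℕ) (B : ℝ → ℝ) (t : ℝ) : ℝ :=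
  (m / ωn) * aL l / Nf l R K n B t

/-- `E(t) := m/ω_n - Rⁿ D(t)`. -/
noncomputable def Ef (m ωn l R K : ℝ) (n : ℕ) (B : ℝ → ℝ) (t : ℝ) : ℝ :=
  m / ωn - R ^ n * Df m ωn l R K n B t

/-- `A_T := (m/ω_n)·1/(1 + a_λ Rⁿ/K²)`. -/
noncomputable def AT (m ωn l R K : ℝ) (n : ℕ) : ℝ :=
  (m / ωn) * (1 / (1 + aL l * R ^ n / K ^ 2))

/-- The parabolic operator `𝒫`. -/
noncomputable def Pop (n : ℕ) (χ p q μ : ℝ) (w : ℝ → ℝ → ℝ) (s t : ℝ) : ℝ :=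
  deriv (fun τ => w s τ) t
    - (n : ℝ) ^ (p + 1) * (s ^ (2 - 2 / (n : ℝ)) * (deriv (fun σ => w σ t) s) ^ p
        * deriv (deriv (fun σ => w σ t)) s)
      / Real.sqrt ((deriv (fun σ => w σ t) s) ^ 2
        + (n : ℝ) ^ 2 * s ^ (2 - 2 / (n : ℝ)) * (deriv (deriv (fun σ => w σ t)) s) ^ 2)
    - (n : ℝ) ^ q * χ * ((w s t - (μ / (n : ℝ)) * s) * (deriv (fun σ => w σ t) s) ^ q)
      / Real.sqrt (1 + s ^ (2 / (n : ℝ) - 2) * (w s t - (μ / (n : ℝ)) * s) ^ 2)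

/-- `J₁(s,t)`. -/
noncomputable def J1 (n : ℕ) (p m ωn l R K d : ℝ) (B : ℝ → ℝ) (s t : ℝ) : ℝ :=
  -(n : ℝ) ^ (p + 1) * ((s / B t) ^ (2 - 2 / (n : ℝ)) * phiDD l d (s / B t))
    / Real.sqrt ((B t) ^ (4 / (n : ℝ) - 2) * (phiD l d (s / B t)) ^ 2
        + (n : ℝ) ^ 2 * (B t) ^ (2 / (n : ℝ) - 2) * (s / B t) ^ (2 - 2 / (n : ℝ))
          * (phiDD l d (s / B t)) ^ 2)
    * (Af m ωn l R K n B t * phiD l d (s / B t) / B t) ^ (p - 1)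

/-- `J₂(s,t)`. -/
noncomputable def J2 (n : ℕ) (q χ m ωn l R K d μ : ℝ) (B : ℝ → ℝ) (s t : ℝ) : ℝ :=
  -(n : ℝ) ^ q * χ
      * (Af m ωn l R K n B t * phi l d (s / B t) - (μ / (n : ℝ)) * B t * (s / B t))
    / Real.sqrt (1 + (B t) ^ (2 / (n : ℝ) - 2) * (s / B t) ^ (2 / (n : ℝ) - 2)
        * (Af m ωn l R K n B t * phi l d (s / B t) - (μ / (n : ℝ)) * B t * (s / B t)) ^ 2)
    * (Af m ωn l R K n B t * phiD l d (s / B t) / B t) ^ (q - 1)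


/-!
In the inner region `ξ = s / B(t) < 1` the profile is exponential, so `w_ss = d w_s / B` and the
diffusion term equals `d w_s^p / √(B² + d²) ≥ d w_s^p / √(d² + 1)`.

As a function of `u = √B(t)`, the amplitude `A` is nondecreasing: after cross-multiplying, the
difference of two values is `a_λ (K² - b_λ Rⁿ)(u₂ - u₁)(2K - b_λ (u₁ + u₂)) ≥ 0`. Hence
`A_T = A|_{u = 0} ≤ A(t)`, and `A` is nonincreasing in time together with `B`, so `A' φ ≤ 0`.
The remaining part `-w_s ξ B'` of `w_t` is at most `w_s (d / √(d² + 1)) M^{p-1}` with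
`M = 2λ A_T / e^d ≤ w_s`, which the diffusion term absorbs. Finally `φ(ξ) ≥ (2λ / e^d) ξ` gives
`w ≥ M ξ ≥ μ B₀ ξ ≥ μ s`, so the chemotactic term has the right sign.
-/

open Filter Topology

lemma omegaN_pos {n : ℕ} (hn : 0 < n) : 0 < omegaN n := by
  have hball := Metric.measure_ball_pos MeasureTheory.volume (0 : EuclideanSpace ℝ (Fin n)) one_pos
  exact mul_pos (Nat.cast_pos.mpr hn)
    (ENNReal.toReal_pos hball.ne' MeasureTheory.measure_ball_lt_top.ne)

lemma HasDerivAt.nonpos_of_antitoneOn_of_mem_nhds {g : ℝ → ℝ} {g' x : ℝ} {s : Set ℝ}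
    (hd : HasDerivAt g g' x) (hg : AntitoneOn g s) (hs : s ∈ 𝓝 x) : g' ≤ 0 :=
  hd.hasDerivWithinAt.nonpos_of_antitoneOn
    (by simpa using (PerfectSpace.univ_preperfect _ (mem_univ x)).nhds_inter hs) hg

lemma sqrt_mem_Icc_of_mem_Icc_sq {x K a : ℝ} (hK : 0 ≤ K) (ha : 0 < a)
    (hx : x ∈ Icc 0 (K ^ 2 / (4 * a ^ 2))) : √x ∈ Icc 0 (K / (2 * a)) :=
  ⟨Real.sqrt_nonneg x, (Real.sqrt_le_left (by positivity)).mpr (hx.2.trans_eq (by ring))⟩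

lemma transport_le_diffusion {W M β d p ξ B' : ℝ} (hW : 0 < W) (hβ : 0 < β) (hβ1 : β ≤ 1)
    (hd : 0 < d) (hξ : ξ ∈ Icc (0 : ℝ) 1) (hp : 1 ≤ p) (hM : 0 ≤ M) (hMW : M ≤ W)
    (hB'0 : B' ≤ 0) (hB' : -(d / √(d ^ 2 + 1)) * M ^ (p - 1) ≤ B') :
    W * ξ * -B' ≤ W ^ p * (d * W / β) / √(W ^ 2 + (d * W / β) ^ 2) := by
  have hsqrt : √(W ^ 2 + (d * W / β) ^ 2) = W * √(β ^ 2 + d ^ 2) / β := by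
    rw [show W ^ 2 + (d * W / β) ^ 2 = (W / β) ^ 2 * (β ^ 2 + d ^ 2) by field_simp,
      Real.sqrt_mul (sq_nonneg _), Real.sqrt_sq (by positivity)]
    ring
  have hWp : W * W ^ (p - 1) = W ^ p := by
    rw [← Real.rpow_one_add' hW.le (by linarith), add_sub_cancel]
  have hξB' : ξ * -B' ≤ -B' := mul_le_of_le_one_left (by linarith) hξ.2
  calc W * ξ * -B' ≤ W * (d / √(d ^ 2 + 1) * M ^ (p - 1)) := by
        rw [mul_assoc]; exact mul_le_mul_of_nonneg_left (by linarith) hW.le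
    _ ≤ W * (d / √(d ^ 2 + 1) * W ^ (p - 1)) := by gcongr
    _ = d * W ^ p / √(d ^ 2 + 1) := by rw [← hWp]; ring
    _ ≤ d * W ^ p / √(β ^ 2 + d ^ 2) :=
        div_le_div_of_nonneg_left (by positivity) (by positivity) (Real.sqrt_le_sqrt (by nlinarith))
    _ = W ^ p * (d * W / β) / √(W ^ 2 + (d * W / β) ^ 2) := by
        rw [hsqrt]; field_simp

section Lambda

variable {l : ℝ}

lemma aL_nonneg (hl : 0 < l) : 0 ≤ aL l := by unfold aL; positivity

lemma bL_nonneg (hl : 1 / 3 ≤ l) : 0 ≤ bL l := div_nonneg (by linarith) (by linarith)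

lemma aL_add_bL (hl : l ≠ 0) : aL l + bL l = (l + 1) / 2 := by
  unfold aL bL; field_simp; ring

lemma aL_add_bL_pos (hl : 0 < l) : 0 < aL l + bL l := by
  rw [aL_add_bL hl.ne']; linarith

end Lambda

noncomputable def ampDenom (l Rn K u : ℝ) : ℝ :=
  K ^ 2 + aL l * Rn - (aL l + bL l) * (2 * K * u - bL l * u ^ 2)

/-- `A(t) = amplitude (m / ω_n) λ Rⁿ K √B(t)` and `A_T = amplitude (m / ω_n) λ Rⁿ K 0`. -/
noncomputable def amplitude (c l Rn K u : ℝ) : ℝ := c * (K - bL l * u) ^ 2 / ampDenom l Rn K u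

section Amplitude

variable {c l Rn K u : ℝ}

lemma ampDenom_pos (hl : 1 / 3 ≤ l) (hRn : 0 < Rn) (hK : 0 < K)
    (hu : u ∈ Icc 0 (K / (2 * (aL l + bL l)))) : 0 < ampDenom l Rn K u := by
  have hl0 : 0 < l := by linarith
  have hb := bL_nonneg hl
  have hu' : 2 * (aL l + bL l) * u ≤ K := (le_div_iff₀' (by linarith [aL_add_bL_pos hl0])).mp hu.2
  unfold ampDenom
  rcases (aL_nonneg hl0).eq_or_lt with ha0 | ha0
  · rw [← ha0, zero_add] at hu' ⊢
    nlinarith [mul_nonneg hb hu.1]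
  · nlinarith [mul_nonneg hb (sq_nonneg u), mul_le_mul_of_nonneg_left hu' hK.le]

lemma ampDenom_cross (l Rn K u₁ u₂ : ℝ) :
    (K - bL l * u₂) ^ 2 * ampDenom l Rn K u₁ - (K - bL l * u₁) ^ 2 * ampDenom l Rn K u₂
      = aL l * (K ^ 2 - bL l * Rn) * (u₂ - u₁) * (2 * K - bL l * (u₁ + u₂)) := by
  unfold ampDenom; ring

lemma amplitude_monotoneOn (hc : 0 ≤ c) (hl : 1 / 3 ≤ l) (hRn : 0 < Rn) (hK : 0 < K)
    (hKb : bL l * Rn ≤ K ^ 2) :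
    MonotoneOn (amplitude c l Rn K) (Icc 0 (K / (2 * (aL l + bL l)))) := by
  intro u₁ hu₁ u₂ hu₂ h12
  have hl0 : 0 < l := by linarith
  have hbu : ∀ u ∈ Icc 0 (K / (2 * (aL l + bL l))), 2 * bL l * u ≤ K := fun u hu => by
    have := (le_div_iff₀' (by linarith [aL_add_bL_pos hl0])).mp hu.2
    nlinarith [aL_nonneg hl0, hu.1]
  have hcross : 0 ≤ aL l * (K ^ 2 - bL l * Rn) * (u₂ - u₁) * (2 * K - bL l * (u₁ + u₂)) := by
    have := hbu u₁ hu₁; have := hbu u₂ hu₂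
    exact mul_nonneg (mul_nonneg (mul_nonneg (aL_nonneg hl0) (by linarith)) (by linarith))
      (by linarith)
  unfold amplitude
  rw [div_le_div_iff₀ (ampDenom_pos hl hRn hK hu₁) (ampDenom_pos hl hRn hK hu₂)]
  nlinarith [ampDenom_cross l Rn K u₁ u₂, mul_nonneg hc hcross]

end Amplitude

section Af

variable {m ω l R K : ℝ} {n : ℕ} {B : ℝ → ℝ} {t : ℝ}

lemma Nf_eq_ampDenom (hB : 0 ≤ B t) : Nf l R K n B t = ampDenom l (R ^ n) K √(B t) := by
  rw [Nf, ampDenom, Real.sq_sqrt hB]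

lemma Af_eq_amplitude (hB : 0 ≤ B t) :
    Af m ω l R K n B t = amplitude (m / ω) l (R ^ n) K √(B t) := by
  rw [Af, amplitude, ← Nf_eq_ampDenom hB]
  congr 2
  linear_combination -(bL l) ^ 2 * Real.sq_sqrt hB

lemma AT_eq_amplitude_zero (hK : K ≠ 0) : AT m ω l R K n = amplitude (m / ω) l (R ^ n) K 0 := by
  rw [AT, amplitude, ampDenom]
  field_simp
  simp

lemma AT_pos (hmω : 0 < m / ω) (hl : 0 < l) (hR : 0 < R) : 0 < AT m ω l R K n :=
  mul_pos hmω <| one_div_pos.mpr <| add_pos_of_pos_of_nonneg one_pos <|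
    div_nonneg (mul_nonneg (aL_nonneg hl) (pow_pos hR n).le) (sq_nonneg K)

lemma Nf_pos (hl : 1 / 3 ≤ l) (hR : 0 < R) (hK : 0 < K)
    (hBt : B t ∈ Icc 0 (K ^ 2 / (4 * (aL l + bL l) ^ 2))) : 0 < Nf l R K n B t := by
  rw [Nf_eq_ampDenom hBt.1]
  exact ampDenom_pos hl (pow_pos hR n) hK
    (sqrt_mem_Icc_of_mem_Icc_sq hK.le (aL_add_bL_pos (by linarith)) hBt)

lemma AT_le_Af (hmω : 0 ≤ m / ω) (hl : 1 / 3 ≤ l) (hR : 0 < R) (hK : 0 < K)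
    (hKb : bL l * R ^ n ≤ K ^ 2) (hBt : B t ∈ Icc 0 (K ^ 2 / (4 * (aL l + bL l) ^ 2))) :
    AT m ω l R K n ≤ Af m ω l R K n B t := by
  have hab := aL_add_bL_pos (by linarith : 0 < l)
  rw [AT_eq_amplitude_zero hK.ne', Af_eq_amplitude hBt.1]
  exact amplitude_monotoneOn hmω hl (pow_pos hR n) hK hKb ⟨le_rfl, by positivity⟩
    (sqrt_mem_Icc_of_mem_Icc_sq hK.le hab hBt) (Real.sqrt_nonneg _)

lemma antitoneOn_Af {S : Set ℝ} (hmω : 0 ≤ m / ω) (hl : 1 / 3 ≤ l) (hR : 0 < R)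
    (hK : 0 < K) (hKb : bL l * R ^ n ≤ K ^ 2) (hB : AntitoneOn B S)
    (hBS : MapsTo B S (Icc 0 (K ^ 2 / (4 * (aL l + bL l) ^ 2)))) :
    AntitoneOn (Af m ω l R K n B) S := by
  have hab := aL_add_bL_pos (by linarith : 0 < l)
  intro t₁ h₁ t₂ h₂ h12
  rw [Af_eq_amplitude (hBS h₁).1, Af_eq_amplitude (hBS h₂).1]
  exact amplitude_monotoneOn hmω hl (pow_pos hR n) hK hKb
    (sqrt_mem_Icc_of_mem_Icc_sq hK.le hab (hBS h₂)) (sqrt_mem_Icc_of_mem_Icc_sq hK.le hab (hBS h₁))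
    (Real.sqrt_le_sqrt (hB h₁ h₂ h12))

lemma differentiableAt_Af (hB : DifferentiableAt ℝ B t) (hBt : 0 < B t)
    (hN : Nf l R K n B t ≠ 0) : DifferentiableAt ℝ (Af m ω l R K n B) t := by
  unfold Af Nf at *
  fun_prop (disch := positivity)

end Af

section Phi

variable {l d ξ : ℝ}

lemma phi_eventuallyEq (hξ : ξ < 1) :
    phi l d =ᶠ[𝓝 ξ] fun x => 2 * l / (d * exp d) * (exp (d * x) - 1) := by
  filter_upwards [Iio_mem_nhds hξ] with x (hx : x < 1)
  rw [phi, if_pos hx]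

lemma phiD_eventuallyEq (hξ : ξ < 1) :
    phiD l d =ᶠ[𝓝 ξ] fun x => 2 * l * exp (d * (x - 1)) := by
  filter_upwards [Iio_mem_nhds hξ] with x (hx : x < 1)
  rw [phiD, if_pos hx]

lemma phiD_of_lt (hξ : ξ < 1) : phiD l d ξ = 2 * l * exp (d * (ξ - 1)) :=
  (phiD_eventuallyEq hξ).eq_of_nhds

lemma phiDD_of_lt (hξ : ξ < 1) : phiDD l d ξ = d * phiD l d ξ := by
  rw [phiDD, if_pos hξ, phiD_of_lt hξ]; ring

lemma mul_le_phi (hl : 0 ≤ l) (hd : 0 < d) (hξ : ξ < 1) : 2 * l / exp d * ξ ≤ phi l d ξ := by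
  rw [phi, if_pos hξ]
  calc 2 * l / exp d * ξ = 2 * l / (d * exp d) * (d * ξ) := by field_simp
    _ ≤ 2 * l / (d * exp d) * (exp (d * ξ) - 1) := by
      gcongr; linarith [add_one_le_exp (d * ξ)]

lemma mul_div_exp_le_mul_phiD_div {A β x : ℝ} (hl : 0 ≤ l) (hd : 0 ≤ d) (hA : 0 ≤ A)
    (hβ1 : β ≤ 1) (hx : 0 ≤ x) (hxβ : x < β) : 2 * l * A / exp d ≤ A * phiD l d (x / β) / β := by
  have hβ : 0 < β := hx.trans_lt hxβ
  have hξ1 : x / β < 1 := (div_lt_one hβ).mpr hxβ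
  have hexp : exp (-d) ≤ exp (d * (x / β - 1)) :=
    exp_le_exp.mpr (by nlinarith [div_nonneg hx hβ.le])
  calc 2 * l * A / exp d = A * (2 * l * exp (-d)) := by rw [exp_neg]; ring
    _ ≤ A * phiD l d (x / β) := by rw [phiD_of_lt hξ1]; gcongr
    _ ≤ A * phiD l d (x / β) / β := le_div_self (by rw [phiD_of_lt hξ1]; positivity) hβ hβ1

lemma hasDerivAt_phi (hd : d ≠ 0) (hξ : ξ < 1) : HasDerivAt (phi l d) (phiD l d ξ) ξ := by
  have h := (((hasDerivAt_id ξ).const_mul d).exp.sub_const 1).const_mul (2 * l / (d * exp d))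
  refine (h.congr_deriv ?_).congr_of_eventuallyEq (phi_eventuallyEq hξ)
  rw [phiD_of_lt hξ, mul_sub, mul_one, Real.exp_sub, id]
  field_simp

lemma hasDerivAt_phiD (hξ : ξ < 1) : HasDerivAt (phiD l d) (phiDD l d ξ) ξ := by
  have h := ((((hasDerivAt_id ξ).sub_const 1).const_mul d).exp).const_mul (2 * l)
  refine (h.congr_deriv ?_).congr_of_eventuallyEq (phiD_eventuallyEq hξ)
  rw [phiDD_of_lt hξ, phiD_of_lt hξ]
  simp only [id, mul_one]; ring

lemma hasDerivAt_mul_phi_div {A β x : ℝ} (hd : d ≠ 0) (hx : x / β < 1) :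
    HasDerivAt (fun σ => A * phi l d (σ / β)) (A * phiD l d (x / β) / β) x := by
  have h := ((hasDerivAt_phi (l := l) hd hx).comp x ((hasDerivAt_id x).div_const β)).const_mul A
  exact h.congr_deriv (by simp only [one_div]; ring)

lemma deriv_deriv_mul_phi_div {A β x : ℝ} (hd : d ≠ 0) (hβ : 0 < β) (hx : x < β) :
    deriv (deriv fun σ => A * phi l d (σ / β)) x = A * phiDD l d (x / β) / β / β := by
  have hderiv : (deriv fun σ => A * phi l d (σ / β)) =ᶠ[𝓝 x]
      fun σ => A * phiD l d (σ / β) / β := by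
    filter_upwards [Iio_mem_nhds hx] with σ (hσ : σ < β)
    exact (hasDerivAt_mul_phi_div hd ((div_lt_one hβ).mpr hσ)).deriv
  have h := (((hasDerivAt_phiD (l := l) (d := d) ((div_lt_one hβ).mpr hx)).comp x
    ((hasDerivAt_id x).div_const β)).const_mul A).div_const β
  replace h : HasDerivAt (fun σ => A * phiD l d (σ / β) / β) (A * phiDD l d (x / β) / β / β) x :=
    h.congr_deriv (by simp only [one_div]; ring)
  rw [hderiv.deriv_eq, h.deriv]

lemma HasDerivAt.mul_phi_const_div {A B : ℝ → ℝ} {A' B' s t : ℝ} (hA : HasDerivAt A A' t)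
    (hB : HasDerivAt B B' t) (hBt : B t ≠ 0) (hd : d ≠ 0) (hs : s / B t < 1) :
    HasDerivAt (fun τ => A τ * phi l d (s / B τ))
      (A' * phi l d (s / B t) + A t * (phiD l d (s / B t) * (-(s * B') / B t ^ 2))) t := by
  have h := hA.mul ((hasDerivAt_phi (l := l) hd hs).comp t ((hasDerivAt_const t s).div hB hBt))
  exact h.congr_deriv (by simp only [Function.comp_apply, Pi.div_apply]; ring)

end Phi

lemma Pop_one (χ p q μ : ℝ) (w : ℝ → ℝ → ℝ) (s t : ℝ) :
    Pop 1 χ p q μ w s t = deriv (fun τ => w s τ) t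
      - deriv (fun σ => w σ t) s ^ p * deriv (deriv fun σ => w σ t) s
        / √(deriv (fun σ => w σ t) s ^ 2 + deriv (deriv fun σ => w σ t) s ^ 2)
      - χ * ((w s t - μ * s) * deriv (fun σ => w σ t) s ^ q) / √(1 + (w s t - μ * s) ^ 2) := by
  simp [Pop]

theorem Pop_one_mul_phi_nonpos {χ p q μ l d M : ℝ} {A B : ℝ → ℝ} {A' B' s t : ℝ}
    (hχ : 0 ≤ χ) (hp : 1 ≤ p) (hl : 0 < l) (hd : 0 < d)
    (hA : HasDerivAt A A' t) (hA' : A' ≤ 0) (hB : HasDerivAt B B' t) (hB'0 : B' ≤ 0)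
    (hB' : -(d / √(d ^ 2 + 1)) * M ^ (p - 1) ≤ B') (hBt1 : B t ≤ 1) (hs : s ∈ Ioo 0 (B t))
    (hM : 0 < M) (hMA : M ≤ 2 * l * A t / exp d) (hμM : μ * B t ≤ M) :
    Pop 1 χ p q μ (fun σ τ => A τ * phi l d (σ / B τ)) s t ≤ 0 := by
  obtain ⟨hs0, hsB⟩ := hs
  have hBt : 0 < B t := hs0.trans hsB
  have hξ0 : 0 < s / B t := div_pos hs0 hBt
  have hξ1 : s / B t < 1 := (div_lt_one hBt).mpr hsB
  have hA0 : 0 ≤ A t := by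
    have h := mul_nonneg (hM.trans_le hMA).le (exp_pos d).le
    rw [div_mul_cancel₀ _ (exp_pos d).ne'] at h
    exact (mul_nonneg_iff_of_pos_left (by positivity)).mp h
  set W := A t * phiD l d (s / B t) / B t with hW
  have hMW : M ≤ W := hMA.trans (mul_div_exp_le_mul_phiD_div hl.le hd.le hA0 hBt1 hs0.le hsB)
  have hW0 : 0 < W := hM.trans_le hMW
  have hφ : 2 * l / exp d * (s / B t) ≤ phi l d (s / B t) := mul_le_phi hl.le hd hξ1
  have hchemo : μ * s ≤ A t * phi l d (s / B t) :=
    calc μ * s = μ * B t * (s / B t) := by field_simp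
      _ ≤ 2 * l * A t / exp d * (s / B t) := by gcongr; linarith
      _ = A t * (2 * l / exp d * (s / B t)) := by ring
      _ ≤ A t * phi l d (s / B t) := by gcongr
  rw [Pop_one, (hA.mul_phi_const_div hB hBt.ne' hd.ne' hξ1).deriv,
    (hasDerivAt_mul_phi_div hd.ne' hξ1).deriv, deriv_deriv_mul_phi_div hd.ne' hBt hsB,
    phiDD_of_lt hξ1]
  have hwss : A t * (d * phiD l d (s / B t)) / B t / B t = d * W / B t := by rw [hW]; ring
  have hwt : A t * (phiD l d (s / B t) * (-(s * B') / B t ^ 2)) = W * (s / B t) * -B' := by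
    rw [hW]; field_simp
  rw [hwss, hwt, ← hW]
  have htransport := transport_le_diffusion hW0 hBt hBt1 hd ⟨hξ0.le, hξ1.le⟩ hp hM.le hMW hB'0 hB'
  have hgrowth : A' * phi l d (s / B t) ≤ 0 :=
    mul_nonpos_of_nonpos_of_nonneg hA' (le_trans (by positivity) hφ)
  have hchemotaxis : 0 ≤ χ * ((A t * phi l d (s / B t) - μ * s) * W ^ q)
      / √(1 + (A t * phi l d (s / B t) - μ * s) ^ 2) :=
    div_nonneg (mul_nonneg hχ (mul_nonneg (sub_nonneg.mpr hchemo) (Real.rpow_nonneg hW0.le q)))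
      (Real.sqrt_nonneg _)
  linarith

theorem stmt11_general (R χ p q m l K T d B0 : ℝ) (hR : 0 < R) (hχ : 0 < χ)
    (hp : 1 ≤ p) (hm : 0 < m)
    (hl : l ∈ Set.Icc (1/3 : ℝ) 1) (hK : 0 < K) (hKb : Real.sqrt (bL l * R) ≤ K)
    (hd : d ∈ Set.Ioo (1 : ℝ) 2)
    (hB0 : B0 ∈ Set.Ioo (0 : ℝ) 1)
    (hB0le : B0 ≤ K ^ 2 / (4 * (aL l + bL l) ^ 2))
    (hB0small : B0 < 2 * l * AT m (omegaN 1) l R K 1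
        / (Real.exp d * (m / (omegaN 1 * R))))
    (B B' : ℝ → ℝ)
    (hB : ∀ t ∈ Set.Ico (0 : ℝ) T, HasDerivAt B (B' t) t)
    (hBpos : ∀ t ∈ Set.Ico (0 : ℝ) T, 0 < B t)
    (hBanti : AntitoneOn B (Set.Ico 0 T))
    (hBinit : B 0 ≤ B0)
    (hB' : ∀ t ∈ Set.Ioo (0 : ℝ) T,
      B' t ≥ -(d / Real.sqrt (d ^ 2 + 1))
        * (2 * l * AT m (omegaN 1) l R K 1 / Real.exp d) ^ (p - 1)) :
    ∀ t ∈ Set.Ioo (0 : ℝ) T, ∀ s ∈ Set.Ioo (0 : ℝ) (B t),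
      Pop 1 χ p q (m / (omegaN 1 * R))
        (fun σ τ => Af m (omegaN 1) l R K 1 B τ * phi l d (σ / B τ)) s t ≤ 0 := by
  intro t ⟨ht0, htT⟩ s hs
  have htI : t ∈ Ico 0 T := ⟨ht0.le, htT⟩
  have hS : Ico 0 T ∈ 𝓝 t := Ico_mem_nhds ht0 htT
  have hl0 : 0 < l := by linarith [hl.1]
  have hmω : 0 < m / omegaN 1 := div_pos hm (omegaN_pos one_pos)
  have hKb' : bL l * R ^ 1 ≤ K ^ 2 := by rw [pow_one]; exact (Real.sqrt_le_left hK.le).mp hKb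
  have hBle : ∀ τ ∈ Ico 0 T, B τ ≤ B0 := fun τ hτ =>
    (hBanti ⟨le_rfl, ht0.trans htT⟩ hτ hτ.1).trans hBinit
  have hrange : MapsTo B (Ico 0 T) (Icc 0 (K ^ 2 / (4 * (aL l + bL l) ^ 2))) := fun τ hτ =>
    ⟨(hBpos τ hτ).le, (hBle τ hτ).trans hB0le⟩
  have hA := (differentiableAt_Af (m := m) (ω := omegaN 1) (hB t htI).differentiableAt
    (hBpos t htI) (Nf_pos (n := 1) hl.1 hR hK (hrange htI)).ne').hasDerivAt
  refine Pop_one_mul_phi_nonpos hχ.le hp hl0 (by linarith [hd.1]) hA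
    (hA.nonpos_of_antitoneOn_of_mem_nhds (antitoneOn_Af hmω.le hl.1 hR hK hKb' hBanti hrange) hS)
    (hB t htI) ((hB t htI).nonpos_of_antitoneOn_of_mem_nhds hBanti hS) (hB' t ⟨ht0, htT⟩)
    ((hBle t htI).trans hB0.2.le) hs (div_pos (mul_pos (by positivity) (AT_pos hmω hl0 hR)) (exp_pos d))
    (by gcongr; exact AT_le_Af hmω.le hl.1 hR hK hKb' (hrange htI)) ?_
  have hμ : 0 < m / (omegaN 1 * R) := div_pos hm (mul_pos (omegaN_pos one_pos) hR)
  rw [lt_div_iff₀ (by positivity)] at hB0small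
  rw [le_div_iff₀ (exp_pos d)]
  nlinarith [mul_le_mul_of_nonneg_left (hBle t htI) hμ.le, exp_pos d]

/-- Very inner region, `n = 1`: under the stated conditions on `B`,
`(𝒫 w_in)(s,t) ≤ 0` for all `t ∈ (0,T)` and `s ∈ (0,B(t))`. -/
theorem stmt11 (R χ p q m l K T d B0 : ℝ) (hR : 0 < R) (hχ : 0 < χ)
    (hp : 1 ≤ p) (hq : 1 ≤ q) (hpq : p ≤ q) (hm : 0 < m)
    (hl : l ∈ Set.Icc (1/3 : ℝ) 1) (hK : 0 < K) (hKb : Real.sqrt (bL l * R) ≤ K)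
    (hT : 0 < T)
    (hd : d ∈ Set.Ioo (1 : ℝ) 2) (hde : (2 - d) * Real.exp d - 2 = 0)
    (hB0 : B0 ∈ Set.Ioo (0 : ℝ) 1) (hB0R : K * Real.sqrt B0 ≤ R)
    (hB0le : B0 ≤ K ^ 2 / (4 * (aL l + bL l) ^ 2))
    (hB0small : B0 < 2 * l * AT m (omegaN 1) l R K 1
        / (Real.exp d * (m / (omegaN 1 * R))))
    (B B' : ℝ → ℝ)
    (hB : ∀ t ∈ Set.Ico (0 : ℝ) T, HasDerivAt B (B' t) t)
    (hB'c : ContinuousOn B' (Set.Ico 0 T))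
    (hBpos : ∀ t ∈ Set.Ico (0 : ℝ) T, 0 < B t)
    (hBanti : AntitoneOn B (Set.Ico 0 T))
    (hBinit : B 0 ≤ B0)
    (hB' : ∀ t ∈ Set.Ioo (0 : ℝ) T,
      B' t ≥ -(d / Real.sqrt (d ^ 2 + 1))
        * (2 * l * AT m (omegaN 1) l R K 1 / Real.exp d) ^ (p - 1)) :
    ∀ t ∈ Set.Ioo (0 : ℝ) T, ∀ s ∈ Set.Ioo (0 : ℝ) (B t),
      Pop 1 χ p q (m / (omegaN 1 * R))
        (fun σ τ => Af m (omegaN 1) l R K 1 B τ * phi l d (σ / B τ)) s t ≤ 0 :=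
  stmt11_general R χ p q m l K T d B0 hR hχ hp hm hl hK hKb hd hB0 hB0le hB0small B B' hB hBpos
    hBanti hBinit hB'
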